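/- There exists β0 ∈ (0,1) such that for every β ∈ (0,β0) there exists a positive integer n0 with the following property. Let n ≥ n0, let (G,c) be an edge-colored graph on n vertices that is edge-minimal subject to δ^c(G) ≥ n/2, let D be a D_G-digraph for (G,c) with associated graph G*, and suppose |E(G*)| ≤ βn². Then for all sets X, Y ⊆ V(G) with |X| ≥ (1/2 − 2√β)n and |Y| ≥ (1/2 − 2√β)n, the number of arcs xy of D with x ∈ X and y ∈ Y is at least βn². -/

import Mathlib

open SimpleGraph

/-- Number of distinct colors on edges incident to `v`. -/
noncomputable def colorDegree {V C : Type*} (G : SimpleGraph V) (c : Sym2 V → C) (v : V) : ℕ :=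
  (c '' (G.incidenceSet v)).ncard

/-- The minimum color degree of `(G, c)` is at least `r`. -/
def MinColorDegreeGe {V C : Type*} (G : SimpleGraph V) (c : Sym2 V → C) (r : ℝ) : Prop :=
  ∀ v : V, r ≤ (colorDegree G c v : ℝ)

/-- `(G, c)` is edge-minimal subject to `δ^c(G) ≥ n/2` where `n` is the number of vertices. -/
def EdgeMinimal {V C : Type*} [Fintype V] (G : SimpleGraph V) (c : Sym2 V → C) : Prop :=
  MinColorDegreeGe G c ((Fintype.card V : ℝ) / 2) ∧
  ∀ e ∈ G.edgeSet, ¬ MinColorDegreeGe (G.deleteEdges {e}) c ((Fintype.card V : ℝ) / 2)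

/-- `d_{F_α}(v)`: the number of edges of color `α` incident to `v`. -/
noncomputable def monoDeg {V C : Type*} (G : SimpleGraph V) (c : Sym2 V → C) (α : C) (v : V) : ℕ :=
  {w : V | G.Adj v w ∧ c s(v, w) = α}.ncard

/-- `D` is a `D_G`-digraph for `(G, c)`: for every color `α` and vertex `v` with
`1 ≤ d_{F_α}(v) ≤ √n`, exactly one arc `v → w` along an edge of color `α`, and no other arcs. -/
def IsDGDigraph {V C : Type*} [Fintype V] (G : SimpleGraph V) (c : Sym2 V → C)
    (D : V → V → Prop) : Prop :=
  (∀ v w, D v w → G.Adj v w) ∧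
  (∀ v w w', D v w → D v w' → c s(v, w) = c s(v, w') → w = w') ∧
  (∀ v w, D v w → (monoDeg G c (c s(v, w)) v : ℝ) ≤ Real.sqrt (Fintype.card V)) ∧
  (∀ v (α : C), 1 ≤ monoDeg G c α v → (monoDeg G c α v : ℝ) ≤ Real.sqrt (Fintype.card V) →
      ∃ w, D v w ∧ c s(v, w) = α)

/-- The bidirected graph `G*` of a digraph `D`: `{u,v}` is an edge iff both `uv` and `vu` are arcs. -/
def Gstar {V : Type*} (D : V → V → Prop) : SimpleGraph V where
  Adj u v := u ≠ v ∧ D u v ∧ D v u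
  symm := ⟨fun u v h => ⟨h.1.symm, h.2.2, h.2.1⟩⟩
  loopless := ⟨fun v h => h.1 rfl⟩

/-- A rainbow path: a path whose edges receive pairwise distinct colors. -/
def IsRainbowPath {V C : Type*} {G : SimpleGraph V} {u v : V} (c : Sym2 V → C)
    (p : G.Walk u v) : Prop :=
  p.IsPath ∧ (p.edges.map c).Nodup

/-- The number of arcs of `D` from `X` to `Y`. -/
noncomputable def arcsBetween {V : Type*} (D : V → V → Prop) (X Y : Set V) : ℕ :=
  {p : V × V | p.1 ∈ X ∧ p.2 ∈ Y ∧ D p.1 p.2}.ncard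

/-- `β`-extremal of type 1 with respect to the digraph `D`. -/
def ExtremalType1 {V : Type*} (β : ℝ) (n : ℕ) (D : V → V → Prop) : Prop :=
  ∃ V1 V2 : Set V, V1 ∪ V2 = Set.univ ∧ Disjoint V1 V2 ∧
    (1 / 2 - β) * n ≤ (V1.ncard : ℝ) ∧ (1 / 2 - β) * n ≤ (V2.ncard : ℝ) ∧
    ((arcsBetween D V1 V2 + arcsBetween D V2 V1 : ℕ) : ℝ) ≤ β * n ^ 2

/-- `β`-extremal of type 2 with respect to the digraph `D`. -/
def ExtremalType2 {V : Type*} (β : ℝ) (n : ℕ) (D : V → V → Prop) : Prop :=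
  ((Gstar D).edgeSet.ncard : ℝ) ≤ β * n ^ 2

/-- `(G, c)` is rainbow `k`-connected. -/
def RainbowKConnected {V C : Type*} (G : SimpleGraph V) (c : Sym2 V → C) (k : ℕ) : Prop :=
  ∀ u v : V, u ≠ v → ∃ p : Fin k → G.Walk u v,
    (∀ i, (p i).IsPath) ∧
    (∀ i j, i ≠ j → p i ≠ p j) ∧
    (∀ i j, i ≠ j → ∀ w, w ∈ (p i).support → w ∈ (p j).support → w = u ∨ w = v) ∧
    Set.InjOn c {e : Sym2 V | ∃ i, e ∈ (p i).edges}

/-- `F_α`: the spanning subgraph of `G` consisting of the edges of color `α`. -/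
def monoSubgraph {V C : Type*} (G : SimpleGraph V) (c : Sym2 V → C) (α : C) : SimpleGraph V where
  Adj u v := G.Adj u v ∧ c s(u, v) = α
  symm := by
    constructor
    intro u v h
    refine ⟨h.1.symm, ?_⟩
    rw [Sym2.eq_swap]
    exact h.2
  loopless := ⟨fun v h => G.irrefl h.1⟩

/-- Density of the (ordered) pair `(A, B)` for the relation (digraph) `D`. -/
noncomputable def ddensity {V : Type*} (D : V → V → Prop) (A B : Set V) : ℝ :=
  (arcsBetween D A B : ℝ) / ((A.ncard : ℝ) * (B.ncard : ℝ))

/-- The pair `(A, B)` is `ε`-regular of density `d` for the relation (digraph) `D`. -/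
def RegularPairRel {V : Type*} (D : V → V → Prop) (A B : Set V) (ε d : ℝ) : Prop :=
  ∀ A' ⊆ A, ∀ B' ⊆ B, ε * A.ncard ≤ (A'.ncard : ℝ) → ε * B.ncard ≤ (B'.ncard : ℝ) →
    |ddensity D A' B' - d| ≤ ε

open Finset in
lemma outdeg_lb {V C : Type} [Fintype V] (G : SimpleGraph V) (c : Sym2 V → C)
    (D : V → V → Prop) (hD : IsDGDigraph G c D)
    (hmin : MinColorDegreeGe G c ((Fintype.card V : ℝ) / 2)) (v : V) :
    (Fintype.card V : ℝ) / 2 - Real.sqrt (Fintype.card V) ≤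
      ({w : V | D v w}.ncard : ℝ) := by
  classical
  set n := Fintype.card V with hn
  have hn1 : 1 ≤ n := Fintype.card_pos_iff.mpr ⟨v⟩
  have hsq : (0:ℝ) < Real.sqrt n := Real.sqrt_pos.mpr (by positivity)
  set K : Finset C := (G.incidenceSet v).toFinset.image c with hK
  -- colorDegree = K.card
  have hcd : colorDegree G c v = K.card := by
    rw [colorDegree]
    have : c '' G.incidenceSet v = ↑K := by
      rw [hK, Finset.coe_image, Set.coe_toFinset]
    rw [this, Set.ncard_coe_finset]
  have hKcard : (n : ℝ) / 2 ≤ (K.card : ℝ) := by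
    have := hmin v
    rwa [hcd] at this
  -- monoDeg as a filter card
  have hmono : ∀ α : C, monoDeg G c α v =
      (univ.filter (fun w => G.Adj v w ∧ c s(v, w) = α)).card := by
    intro α
    rw [monoDeg, Set.ncard_eq_toFinset_card']
    congr 1
    ext w
    simp
  -- every color in K has monoDeg ≥ 1
  have hpos : ∀ α ∈ K, 1 ≤ monoDeg G c α v := by
    intro α hα
    rw [hK, Finset.mem_image] at hα
    obtain ⟨e, he, rfl⟩ := hα
    rw [Set.mem_toFinset] at he
    obtain ⟨heE, hv⟩ := he
    obtain ⟨w, rfl⟩ := Sym2.mem_iff_exists.mp hv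
    have hadj : G.Adj v w := G.mem_edgeSet.mp heE
    have : w ∈ {w' : V | G.Adj v w' ∧ c s(v, w') = c s(v, w)} := ⟨hadj, rfl⟩
    have hfin : {w' : V | G.Adj v w' ∧ c s(v, w') = c s(v, w)}.Finite := Set.toFinite _
    rw [monoDeg]
    exact (Set.ncard_pos hfin).mpr ⟨w, this⟩
  set Ksmall := K.filter (fun α => (monoDeg G c α v : ℝ) ≤ Real.sqrt n) with hKs
  set Kbig := K.filter (fun α => ¬ (monoDeg G c α v : ℝ) ≤ Real.sqrt n) with hKb
  have hsplit : Ksmall.card + Kbig.card = K.card := card_filter_add_card_filter_not _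
  -- small colors inject into out-neighbours
  have hsmall : Ksmall.card ≤ {w : V | D v w}.ncard := by
    have hex : ∀ α ∈ Ksmall, ∃ w, D v w ∧ c s(v, w) = α := by
      intro α hα
      rw [hKs, Finset.mem_filter] at hα
      exact hD.2.2.2 v α (hpos α hα.1) hα.2
    set f : C → V := fun α => if h : ∃ w, D v w ∧ c s(v, w) = α then h.choose else v with hf
    have hfmem : ∀ α ∈ Ksmall, f α ∈ univ.filter (fun w => D v w) := by
      intro α hα
      have h := hex α hα
      simp only [hf, dif_pos h]
      exact Finset.mem_filter.mpr ⟨Finset.mem_univ _, h.choose_spec.1⟩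
    have hfc : ∀ α ∈ Ksmall, c s(v, f α) = α := by
      intro α hα
      have h := hex α hα
      simp only [hf, dif_pos h]
      exact h.choose_spec.2
    have := Finset.card_le_card_of_injOn f hfmem (by
      intro a ha b hb hab
      rw [← hfc a ha, ← hfc b hb, hab])
    rw [Set.ncard_eq_toFinset_card']
    convert this using 2
    ext w
    simp
  -- big colors are few
  have hbig : (Kbig.card : ℝ) ≤ Real.sqrt n := by
    set M : C → Finset V := fun α => univ.filter (fun w => G.Adj v w ∧ c s(v, w) = α) with hM
    have hdisj : (Kbig : Set C).PairwiseDisjoint M := by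
      intro a _ b _ hab
      simp only [Finset.disjoint_left, hM, Finset.mem_filter]
      rintro w ⟨-, -, h1⟩ ⟨-, -, h2⟩
      exact hab (h1 ▸ h2 ▸ rfl)
    have hsum : ∑ α ∈ Kbig, (M α).card ≤ n := by
      rw [← Finset.card_biUnion hdisj]
      simpa [hn] using Finset.card_le_univ (Kbig.biUnion M)
    have hlb : ∀ α ∈ Kbig, Real.sqrt n ≤ ((M α).card : ℝ) := by
      intro α hα
      rw [hKb, Finset.mem_filter] at hα
      have := hα.2
      rw [hmono α] at this
      exact le_of_not_ge this
    have h1 : (Kbig.card : ℝ) * Real.sqrt n ≤ (n : ℝ) := by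
      calc (Kbig.card : ℝ) * Real.sqrt n = ∑ _α ∈ Kbig, Real.sqrt n := by
            rw [Finset.sum_const, nsmul_eq_mul]
        _ ≤ ∑ α ∈ Kbig, ((M α).card : ℝ) := Finset.sum_le_sum hlb
        _ = ((∑ α ∈ Kbig, (M α).card : ℕ) : ℝ) := by push_cast; ring
        _ ≤ (n : ℝ) := by exact_mod_cast hsum
    have h2 : (n : ℝ) = Real.sqrt n * Real.sqrt n := (Real.mul_self_sqrt (by positivity)).symm
    nlinarith [hsq]
  have : (K.card : ℝ) - Real.sqrt n ≤ ({w : V | D v w}.ncard : ℝ) := by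
    have h1 : (Ksmall.card : ℝ) ≤ ({w : V | D v w}.ncard : ℝ) := by exact_mod_cast hsmall
    have h2 : (Ksmall.card : ℝ) + (Kbig.card : ℝ) = (K.card : ℝ) := by exact_mod_cast hsplit
    linarith
  linarith
set_option maxHeartbeats 1000000 in
lemma numeric_final (x s t N β r : ℝ)
    (hr2 : r^2 = β) (hr0 : 0 < r) (hru : r ≤ 1/10^4) (hβ0 : 0 < β)
    (hN1 : 1 ≤ N)
    (hx0 : 0 ≤ x) (hxlb : (1/2 - 2*r)*N ≤ x) (hxub : x ≤ N)
    (hs0 : 0 ≤ s) (ht0 : 0 ≤ t) (hbub : s + t ≤ (1/2 + 2*r)*N)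
    (h2star : x*(N/2 - β*N) + t^2/2 ≤ 4*(β*N^2) + (s+t)*(N/2 + β*N))
    (h1C6 : x*(N/2 - β*N) - 2*(β*N^2) ≤ x*t + (x-s)*s + s^2/2)
    (c1' : x*(N/2 - β*N) - β*N^2 ≤ x*(s+t)) : False := by
  have hN0 : (0:ℝ) < N := lt_of_lt_of_le one_pos hN1
  have hb2' : β = r*r := by rw [← hr2]; ring
  have hrr : r*r ≤ (1/10^4)*r := mul_le_mul_of_nonneg_right hru hr0.le
  have hβ1 : β ≤ 1/10^8 := by nlinarith [hb2', hrr, hru, hr0]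
  have hβler : β ≤ r := by nlinarith [hb2', hrr, hr0]
  have hβN : β*N ≤ (1/10^8)*N := mul_le_mul_of_nonneg_right hβ1 hN0.le
  have hβN2 : β*N^2 ≤ r*N^2 := mul_le_mul_of_nonneg_right hβler (sq_nonneg N)
  have hblb : N/2 - 4*β*N ≤ s + t := by
    by_contra hlt
    push_neg at hlt
    have hq : 3*β*N ≤ N/2 - β*N - (s+t) := by linarith
    have h3 : x * (3*β*N) ≤ β*N^2 := by
      have h6 := mul_le_mul_of_nonneg_left hq hx0
      nlinarith [c1']
    have h4 : ((1/2 - 2*r)*N) * (3*β*N) ≤ β*N^2 := by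
      have h7 : (0:ℝ) ≤ 3*β*N := by positivity
      nlinarith [mul_le_mul_of_nonneg_right hxlb h7, h3]
    have h8 : r*(β*N^2) ≤ (1/10^4)*(β*N^2) :=
      mul_le_mul_of_nonneg_right hru (by positivity)
    linarith [h4, h8, mul_pos hβ0 (mul_pos hN0 hN0)]
  have htub : t^2 ≤ 14*r*N^2 := by
    have hm0 : (0:ℝ) ≤ N/2 + β*N := by positivity
    have hm1 : (s+t)*(N/2 + β*N) ≤ ((1/2 + 2*r)*N)*(N/2 + β*N) :=
      mul_le_mul_of_nonneg_right hbub hm0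
    have hm2' : (0:ℝ) ≤ N/2 - β*N := by linarith [hβN, hN0]
    have hm2 : ((1/2 - 2*r)*N)*(N/2 - β*N) ≤ x*(N/2 - β*N) :=
      mul_le_mul_of_nonneg_right hxlb hm2'
    have hh : t^2/2 ≤ 4*(β*N^2) + ((1/2 + 2*r)*N)*(N/2 + β*N)
        - ((1/2 - 2*r)*N)*(N/2 - β*N) := by linarith [h2star, hm1, hm2]
    linarith [hh, hβN2]
  have hsq2 : s^2 ≤ 13*r*N^2 := by
    have hq1 : -((2*r + β)*N) ≤ N/2 - β*N - (s+t) := by linarith [hbub]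
    have hxq : -(3*r*N^2) ≤ x*(N/2 - β*N - (s+t)) := by
      rcases le_or_gt 0 (N/2 - β*N - (s+t)) with h | h
      · have h6 := mul_nonneg hx0 h
        have h7 : (0:ℝ) ≤ 3*r*N^2 := by positivity
        linarith
      · have h5 : N*(N/2 - β*N - (s+t)) ≤ x*(N/2 - β*N - (s+t)) :=
          mul_le_mul_of_nonpos_right hxub h.le
        have h6 : N*(-((2*r + β)*N)) ≤ N*(N/2 - β*N - (s+t)) :=
          mul_le_mul_of_nonneg_left hq1 hN0.le
        nlinarith [h5, h6, hβN2]
    nlinarith [h1C6, hxq, hβN2]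
  have hfin1 : (s+t)^2 ≤ 54*r*N^2 := by nlinarith [htub, hsq2, sq_nonneg (s-t)]
  have hfin2 : (N/2 - 4*β*N)^2 ≤ (s+t)^2 := by
    have h0 : (0:ℝ) ≤ N/2 - 4*β*N := by linarith [hβN, hN0]
    nlinarith [mul_self_le_mul_self h0 hblb]
  have hpos : (0:ℝ) < (1/2 - 4*β)^2 - 54*r := by nlinarith [hβ1, hru, hr0, sq_nonneg β]
  nlinarith [hfin1, hfin2, mul_pos (show (0:ℝ) < N^2 by positivity) hpos]

set_option maxHeartbeats 2000000 in
theorem statement10 :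
    ∃ β0 : ℝ, β0 ∈ Set.Ioo (0 : ℝ) 1 ∧
      ∀ β : ℝ, β ∈ Set.Ioo (0 : ℝ) β0 →
        ∃ n0 : ℕ, 0 < n0 ∧
          ∀ n : ℕ, n0 ≤ n →
            ∀ (V C : Type) [Fintype V] (G : SimpleGraph V) (c : Sym2 V → C)
              (D : V → V → Prop),
              Fintype.card V = n →
              EdgeMinimal G c →
              IsDGDigraph G c D →
              ((Gstar D).edgeSet.ncard : ℝ) ≤ β * n ^ 2 →
              ∀ X Y : Set V,
                (1 / 2 - 2 * Real.sqrt β) * n ≤ (X.ncard : ℝ) →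
                (1 / 2 - 2 * Real.sqrt β) * n ≤ (Y.ncard : ℝ) →
                β * n ^ 2 ≤ (arcsBetween D X Y : ℝ) := by
  classical
  refine ⟨1/10^8, ⟨by norm_num, by norm_num⟩, ?_⟩
  intro β hβmem
  obtain ⟨hβ0, hβ1⟩ := hβmem
  refine ⟨⌈(1/β)^2⌉₊ + 1, Nat.succ_pos _, ?_⟩
  intro n hn V C _ G c D hcard hEM hD hGstar X Y hX hY
  by_contra hcon
  push_neg at hcon
  -- basic numeric facts
  set r : ℝ := Real.sqrt β with hrdef
  have hr2 : r^2 = β := Real.sq_sqrt hβ0.le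
  have hr0 : 0 < r := Real.sqrt_pos.mpr hβ0
  have hru : r ≤ 1/10^4 := by
    rw [hrdef, show (1/10^4 : ℝ) = Real.sqrt ((1/10^4)^2) from
      (Real.sqrt_sq (by norm_num)).symm]
    exact Real.sqrt_le_sqrt (by nlinarith)
  set N : ℝ := (n : ℝ) with hNdef
  have hN1 : (1:ℝ) ≤ N := by
    have h : 1 ≤ n := le_trans (Nat.succ_le_succ (Nat.zero_le _)) hn
    rw [hNdef]; exact_mod_cast h
  have hN0 : (0:ℝ) < N := lt_of_lt_of_le one_pos hN1
  have hsqn : Real.sqrt N ≤ β * N := by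
    have h1 : ((1:ℝ)/β)^2 ≤ N := by
      have h2 : ((1/β)^2 : ℝ) ≤ (⌈(1/β)^2⌉₊ : ℝ) := Nat.le_ceil _
      have h3 : ((⌈(1/β)^2⌉₊ : ℕ) : ℝ) ≤ N := by
        rw [hNdef]; exact_mod_cast le_trans (Nat.le_succ _) hn
      linarith
    have h4 : (1:ℝ)/β ≤ Real.sqrt N := by
      rw [show (1:ℝ)/β = Real.sqrt ((1/β)^2) from (Real.sqrt_sq (by positivity)).symm]
      exact Real.sqrt_le_sqrt h1
    have h5 : Real.sqrt N * Real.sqrt N = N := Real.mul_self_sqrt hN0.le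
    have h6 : 0 < Real.sqrt N := Real.sqrt_pos.mpr hN0
    nlinarith [h5, h6.le, mul_le_mul_of_nonneg_right ((div_le_iff₀ hβ0).mp h4) h6.le]
  -- finsets
  set Xf : Finset V := X.toFinset with hXf
  set Yf : Finset V := Y.toFinset with hYf
  set Bf : Finset V := Yfᶜ with hBf
  set Tf : Finset V := Bf \ Xf with hTf
  set Sf : Finset V := Bf ∩ Xf with hSf
  set Rf : Finset V := (Xf ∪ Tf)ᶜ with hRf
  set x : ℝ := (Xf.card : ℝ) with hxdef
  set y : ℝ := (Yf.card : ℝ) with hydef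
  set s : ℝ := (Sf.card : ℝ) with hsdef
  set t : ℝ := (Tf.card : ℝ) with htdef
  have hs0 : 0 ≤ s := by positivity
  have ht0 : 0 ≤ t := by positivity
  have hx0 : 0 ≤ x := by positivity
  have hxlb : (1/2 - 2*r)*N ≤ x := by
    rw [hxdef, hXf, ← Set.ncard_eq_toFinset_card']; exact hX
  have hylb : (1/2 - 2*r)*N ≤ y := by
    rw [hydef, hYf, ← Set.ncard_eq_toFinset_card']; exact hY
  have hxub : x ≤ N := by
    rw [hxdef, hNdef, ← hcard]; exact_mod_cast Finset.card_le_univ _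
  have hbcard : (Bf.card : ℝ) = s + t := by
    rw [hsdef, htdef]
    have := Finset.card_sdiff_add_card_inter Bf Xf
    push_cast [← this]; ring
  have hbN : s + t = N - y := by
    rw [← hbcard, hBf, Finset.card_compl, hydef, hNdef, ← hcard]
    rw [Nat.cast_sub (Finset.card_le_univ Yf)]
  have hbub : s + t ≤ (1/2 + 2*r)*N := by rw [hbN]; linarith
  -- indicator counting setup
  set a : V → V → ℕ := fun u w => if D u w then 1 else 0 with ha
  set g : V → V → ℕ := fun u w => if (Gstar D).Adj u w then 1 else 0 with hg
  set A : Finset V → Finset V → ℕ := fun P Q => ∑ u ∈ P, ∑ w ∈ Q, a u w with hA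
  have harc : ∀ P Q : Finset V, arcsBetween D ↑P ↑Q = A P Q := by
    intro P Q
    rw [arcsBetween]
    have hset : {p : V × V | p.1 ∈ (↑P : Set V) ∧ p.2 ∈ (↑Q : Set V) ∧ D p.1 p.2}
        = ↑((P ×ˢ Q).filter (fun p => D p.1 p.2)) := by
      ext p
      simp [Finset.mem_product, and_assoc]
    rw [hset, Set.ncard_coe_finset, Finset.card_filter, Finset.sum_product]
    try simp [hA, ha]
  have houtd : ∀ u : V, N/2 - β*N ≤ ((∑ w, a u w : ℕ) : ℝ) := by
    intro u
    have h1 := outdeg_lb G c D hD hEM.1 u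
    rw [hcard] at h1
    have h2 : {w : V | D u w}.ncard = (Finset.univ.filter (fun w => D u w)).card := by
      rw [Set.ncard_eq_toFinset_card']
      congr 1; ext w; simp
    have h3 : (Finset.univ.filter (fun w => D u w)).card = ∑ w, a u w := by
      rw [Finset.card_filter]
    rw [h2, h3] at h1
    calc N/2 - β*N ≤ (n:ℝ)/2 - Real.sqrt n := by rw [← hNdef]; linarith [hsqn]
      _ ≤ _ := h1
  have hsum_out : ∀ P : Finset V, (P.card : ℝ)*(N/2 - β*N) ≤ ((A P Finset.univ : ℕ) : ℝ) := by
    intro P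
    have h1 : ∀ u ∈ P, N/2 - β*N ≤ ((∑ w, a u w : ℕ) : ℝ) := fun u _ => houtd u
    have h2 := Finset.card_nsmul_le_sum P (fun u => ((∑ w, a u w : ℕ) : ℝ)) (N/2 - β*N) h1
    rw [nsmul_eq_mul] at h2
    calc (P.card : ℝ)*(N/2 - β*N) ≤ ∑ u ∈ P, ((∑ w, a u w : ℕ) : ℝ) := h2
      _ = ((A P Finset.univ : ℕ) : ℝ) := by rw [hA]; push_cast; ring
  -- pairs vs Gstar edges
  have haa : ∀ u w : V, a u w + a w u ≤ 1 + g u w := by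
    intro u w
    have hD0 : D u w → D w u → (Gstar D).Adj u w := fun h1 h2 => ⟨(hD.1 u w h1).ne, h1, h2⟩
    simp only [ha, hg]
    split_ifs with h1 h2 h3 <;> first | omega | exact absurd (hD0 h1 h2) h3
  have hdeg : ∀ u, ∑ w, g u w = (Gstar D).degree u := by
    intro u
    rw [SimpleGraph.degree, SimpleGraph.neighborFinset_eq_filter, Finset.card_filter]
    try simp [hg]
  have hgsum : ∑ u, ∑ w, g u w = 2 * (Gstar D).edgeFinset.card := by
    simp_rw [hdeg]
    exact SimpleGraph.sum_degrees_eq_twice_card_edges _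
  have hE : (((Gstar D).edgeFinset.card : ℕ) : ℝ) ≤ β*N^2 := by
    have h1 : (Gstar D).edgeSet.ncard = (Gstar D).edgeFinset.card := by
      rw [← SimpleGraph.coe_edgeFinset, Set.ncard_coe_finset]
    rw [h1] at hGstar
    exact hGstar
  have hApair : ∀ P Q : Finset V,
      ((A P Q : ℕ) : ℝ) + ((A Q P : ℕ) : ℝ) ≤ (P.card : ℝ)*(Q.card : ℝ) + 2*(β*N^2) := by
    intro P Q
    have hswap : A Q P = ∑ u ∈ P, ∑ w ∈ Q, a w u := by rw [hA]; exact Finset.sum_comm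
    have h1 : A P Q + A Q P = ∑ u ∈ P, ∑ w ∈ Q, (a u w + a w u) := by
      rw [hswap, hA]
      rw [← Finset.sum_add_distrib]
      exact Finset.sum_congr rfl fun u _ => Finset.sum_add_distrib.symm
    have h2 : ∑ u ∈ P, ∑ w ∈ Q, (a u w + a w u) ≤ ∑ u ∈ P, ∑ w ∈ Q, (1 + g u w) :=
      Finset.sum_le_sum (fun u _ => Finset.sum_le_sum (fun w _ => haa u w))
    have h3 : ∑ u ∈ P, ∑ w ∈ Q, (1 + g u w)
        = P.card * Q.card + ∑ u ∈ P, ∑ w ∈ Q, g u w := by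
      simp only [Finset.sum_add_distrib, Finset.sum_const, smul_eq_mul, mul_one]
      try ring
    have h4 : ∑ u ∈ P, ∑ w ∈ Q, g u w ≤ ∑ u, ∑ w, g u w := by
      calc ∑ u ∈ P, ∑ w ∈ Q, g u w ≤ ∑ u ∈ P, ∑ w, g u w :=
            Finset.sum_le_sum (fun u _ => Finset.sum_le_sum_of_subset (Finset.subset_univ Q))
        _ ≤ ∑ u, ∑ w, g u w := Finset.sum_le_sum_of_subset (Finset.subset_univ P)
    have h5 : A P Q + A Q P ≤ P.card * Q.card + 2 * (Gstar D).edgeFinset.card := by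
      rw [hgsum] at h4; omega
    have h7 : ((A P Q + A Q P : ℕ) : ℝ)
        ≤ ((P.card * Q.card + 2 * (Gstar D).edgeFinset.card : ℕ) : ℝ) := by
      exact_mod_cast h5
    push_cast at h7
    linarith [hE]
  -- coercion of the main assumption
  have hXcoe : (↑Xf : Set V) = X := Set.coe_toFinset X
  have hYcoe : (↑Yf : Set V) = Y := Set.coe_toFinset Y
  have hconA : ((A Xf Yf : ℕ) : ℝ) < β*N^2 := by
    have h := harc Xf Yf
    rw [hXcoe, hYcoe] at h
    rw [← h]
    exact hcon
  -- splitting identities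
  have hdisjXT : Disjoint Xf Tf := by
    rw [hTf]; exact Finset.disjoint_sdiff
  have hTS : Tf ∪ Sf = Bf := by rw [hTf, hSf]; exact Finset.sdiff_union_inter Bf Xf
  have hdisjTS : Disjoint Tf Sf := by rw [hTf, hSf]; exact Finset.disjoint_sdiff_inter Bf Xf
  have hXdecomp : (Xf \ Bf) ∪ Sf = Xf := by
    rw [hSf, Finset.inter_comm]; exact Finset.sdiff_union_inter Xf Bf
  have hdisjXS : Disjoint (Xf \ Bf) Sf := by
    rw [hSf, Finset.inter_comm]; exact Finset.disjoint_sdiff_inter Xf Bf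
  have hsplitY : ∀ P : Finset V, A P Yf + A P Bf = A P Finset.univ := by
    intro P
    rw [hA, hBf]
    rw [← Finset.sum_add_distrib]
    exact Finset.sum_congr rfl fun u _ => Finset.sum_add_sum_compl Yf _
  have hsplit2 : ∀ P Q1 Q2 : Finset V, Disjoint Q1 Q2 → A P (Q1 ∪ Q2) = A P Q1 + A P Q2 := by
    intro P Q1 Q2 hd
    rw [hA]
    rw [← Finset.sum_add_distrib]
    exact Finset.sum_congr rfl fun u _ => Finset.sum_union hd
  have hsplit1 : ∀ P1 P2 Q : Finset V, Disjoint P1 P2 → A (P1 ∪ P2) Q = A P1 Q + A P2 Q := by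
    intro P1 P2 Q hd
    rw [hA]
    exact Finset.sum_union hd
  have hsplitU : ∀ P : Finset V, A P (Xf ∪ Tf) + A P Rf = A P Finset.univ := by
    intro P
    rw [hA, hRf, ← Finset.sum_add_distrib]
    exact Finset.sum_congr rfl fun u _ => Finset.sum_add_sum_compl (Xf ∪ Tf) _
  have hAle : ∀ P Q : Finset V, ((A P Q : ℕ) : ℝ) ≤ (P.card : ℝ) * (Q.card : ℝ) := by
    intro P Q
    have h1 : A P Q ≤ P.card * Q.card := by
      rw [hA]
      calc ∑ u ∈ P, ∑ w ∈ Q, a u w ≤ ∑ u ∈ P, ∑ w ∈ Q, 1 := by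
            refine Finset.sum_le_sum fun u _ => Finset.sum_le_sum fun w _ => ?_
            simp only [ha]; split_ifs <;> omega
        _ = P.card * Q.card := by simp [Finset.sum_const, mul_comm]
    exact_mod_cast h1
  -- card computations
  have hrcard : ((Rf.card : ℕ) : ℝ) = N - (x + t) := by
    have h1 : (Xf ∪ Tf).card = Xf.card + Tf.card := Finset.card_union_of_disjoint hdisjXT
    rw [hRf, Finset.card_compl, Nat.cast_sub (Finset.card_le_univ _), h1, hcard]
    rw [hNdef, hxdef, htdef]
    push_cast
    ring
  have hxscard : (((Xf \ Bf).card : ℕ) : ℝ) = x - s := by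
    have h1 := Finset.card_sdiff_add_card_inter Xf Bf
    rw [Finset.inter_comm, ← hSf] at h1
    have h2 : (((Xf \ Bf).card + Sf.card : ℕ) : ℝ) = ((Xf.card : ℕ) : ℝ) := by
      exact_mod_cast congrArg (Nat.cast : ℕ → ℝ) h1
    push_cast at h2
    rw [hxdef, hsdef]
    linarith
  -- real inequalities
  have c1 : x*(N/2 - β*N) - β*N^2 ≤ ((A Xf Bf : ℕ) : ℝ) := by
    have h1 := hsum_out Xf
    rw [← hxdef] at h1
    have h2 : ((A Xf Yf : ℕ):ℝ) + ((A Xf Bf : ℕ):ℝ) = ((A Xf Finset.univ : ℕ):ℝ) := by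
      exact_mod_cast hsplitY Xf
    linarith [hconA]
  have hBout : (s+t)*(N/2 - β*N) ≤ ((A Bf Finset.univ : ℕ):ℝ) := by
    have h1 := hsum_out Bf
    rw [hbcard] at h1
    exact h1
  have hsplitBU : A Bf Finset.univ = A Bf Xf + (A Tf Tf + A Sf Tf) + A Bf Rf := by
    have h2 : A Bf (Xf ∪ Tf) = A Bf Xf + A Bf Tf := hsplit2 Bf Xf Tf hdisjXT
    have h3 : A Bf Tf = A Tf Tf + A Sf Tf := by
      conv_lhs => rw [← hTS]
      exact hsplit1 Tf Sf Tf hdisjTS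
    have h4 := hsplitU Bf
    omega
  have hsplitBUr : ((A Bf Finset.univ:ℕ):ℝ)
      = ((A Bf Xf:ℕ):ℝ) + (((A Tf Tf:ℕ):ℝ) + ((A Sf Tf:ℕ):ℝ)) + ((A Bf Rf:ℕ):ℝ) := by
    exact_mod_cast hsplitBU
  have hsplitXB : A Xf Bf = A Xf Tf + (A (Xf \ Bf) Sf + A Sf Sf) := by
    have h2 : A Xf (Tf ∪ Sf) = A Xf Tf + A Xf Sf := hsplit2 Xf Tf Sf hdisjTS
    have h3 : A Xf Sf = A (Xf \ Bf) Sf + A Sf Sf := by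
      conv_lhs => rw [← hXdecomp]
      exact hsplit1 _ Sf Sf hdisjXS
    rw [← hTS] at *
    omega
  have hsplitXBr : ((A Xf Bf:ℕ):ℝ)
      = ((A Xf Tf:ℕ):ℝ) + (((A (Xf \ Bf) Sf:ℕ):ℝ) + ((A Sf Sf:ℕ):ℝ)) := by
    exact_mod_cast hsplitXB
  have hATT : 2*((A Tf Tf : ℕ):ℝ) ≤ t*t + 2*(β*N^2) := by
    have h1 := hApair Tf Tf
    rw [← htdef] at h1
    linarith
  have hASS : 2*((A Sf Sf : ℕ):ℝ) ≤ s*s + 2*(β*N^2) := by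
    have h1 := hApair Sf Sf
    rw [← hsdef] at h1
    linarith
  have hAXB_BX : ((A Xf Bf:ℕ):ℝ) + ((A Bf Xf:ℕ):ℝ) ≤ x*(s+t) + 2*(β*N^2) := by
    have h1 := hApair Xf Bf
    rw [← hxdef, hbcard] at h1
    exact h1
  have hABR : ((A Bf Rf:ℕ):ℝ) ≤ (s+t)*(N-(x+t)) := by
    have h1 := hAle Bf Rf
    rw [hbcard, hrcard] at h1
    exact h1
  have hAST : ((A Sf Tf:ℕ):ℝ) ≤ s*t := by
    have h1 := hAle Sf Tf
    rw [← hsdef, ← htdef] at h1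
    exact h1
  have hAXT : ((A Xf Tf:ℕ):ℝ) ≤ x*t := by
    have h1 := hAle Xf Tf
    rw [← hxdef, ← htdef] at h1
    exact h1
  have hAXdS : ((A (Xf \ Bf) Sf:ℕ):ℝ) ≤ (x-s)*s := by
    have h1 := hAle (Xf \ Bf) Sf
    rw [hxscard, ← hsdef] at h1
    exact h1
  -- combined inequalities
  have h2star : x*(N/2 - β*N) + t^2/2 ≤ 4*(β*N^2) + (s+t)*(N/2 + β*N) := by
    linarith [hBout, hsplitBUr, hAXB_BX, c1, hATT, hABR, hAST]
  have h1C6 : x*(N/2 - β*N) - 2*(β*N^2) ≤ x*t + (x-s)*s + s^2/2 := by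
    linarith [c1, hsplitXBr, hAXT, hAXdS, hASS]
  have c1' : x*(N/2 - β*N) - β*N^2 ≤ x*(s+t) := by
    have h1 := hAle Xf Bf
    rw [← hxdef, hbcard] at h1
    linarith [c1]
  exact numeric_final x s t N β r hr2 hr0 hru hβ0 hN1 hx0 hxlb hxub hs0 ht0 hbub h2star h1C6 c1'
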